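/- arXiv:math/0606668 — 2 statements merged into one kernel-verified Lean document; each statement's English description precedes it below -/
import Mathlib

section
/- Let A_0, A_1, ..., A_{t-1} be topical operators on R^d, and suppose the product A_{n-1}⋯A_1 has rank 1 for some n ≤ t. Then max_i(A_{t-1}⋯A_0 0)_i − max_i(A_{t-1}⋯A_1 0)_i = max_i(A_{n-1}⋯A_0 0)_i − max_i(A_{n-1}⋯A_1 0)_i. -/
/-- A map on `ℝ^d` is *topical* if it is isotone and additively homogeneous. -/
def Topical (d : ℕ) (A : (Fin d → ℝ) → (Fin d → ℝ)) : Prop :=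
  (∀ x y : Fin d → ℝ, x ≤ y → A x ≤ A y) ∧
  (∀ (x : Fin d → ℝ) (a : ℝ), A (x + fun _ => a) = A x + fun _ => a)

/-- `compOp A s n = A_{s+n-1} ∘ ⋯ ∘ A_s`. -/
def compOp {d : ℕ} (A : ℕ → (Fin d → ℝ) → (Fin d → ℝ)) (s : ℕ) :
    ℕ → (Fin d → ℝ) → (Fin d → ℝ)
  | 0 => id
  | n + 1 => A (s + n) ∘ compOp A s n

/-- `θ` has rank 1: the induced map on `ℝ^d / ℝ·1` is constant. -/
def Rank1 (d : ℕ) (θ : (Fin d → ℝ) → (Fin d → ℝ)) : Prop :=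
  ∀ x y : Fin d → ℝ, ∃ a : ℝ, θ x = θ y + fun _ => a

/-! Since `A_{n-1}⋯A_1` has rank 1, `A_{n-1}⋯A_1 (A_0 0)` and `A_{n-1}⋯A_1 0` differ by a constant
vector `a·1`. Additive homogeneity carries this relation through the remaining operators
`A_{t-1}⋯A_n`, so for every `t ≥ n` the two orbits `A_{t-1}⋯A_0 0` and `A_{t-1}⋯A_1 0` still differ
by `a·1`, and their maxima by `a`. -/

section compOp

variable {d : ℕ} (A : ℕ → (Fin d → ℝ) → (Fin d → ℝ))

theorem compOp_add (s m k : ℕ) :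
    compOp A s (m + k) = compOp A (s + m) k ∘ compOp A s m := by
  induction k with
  | zero => rfl
  | succ k ih =>
    change A (s + (m + k)) ∘ compOp A s (m + k) = (A (s + m + k) ∘ compOp A (s + m) k) ∘ _
    rw [ih, ← add_assoc, Function.comp_assoc]

theorem compOp_succ (s m : ℕ) : compOp A s (m + 1) = compOp A (s + 1) m ∘ A s := by
  rw [add_comm m, compOp_add]
  rfl

variable {A}

theorem compOp_add_const (hA : ∀ k, Topical d (A k)) (s m : ℕ) (x : Fin d → ℝ) (a : ℝ) :
    compOp A s m (x + fun _ => a) = compOp A s m x + fun _ => a := by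
  induction m with
  | zero => rfl
  | succ m ih => simp only [compOp, Function.comp_apply, ih, (hA (s + m)).2]

theorem Rank1.compOp_zero_apply_eq_add_const {m : ℕ} (hA : ∀ k, Topical d (A k))
    (hrk : Rank1 d (compOp A 1 m)) :
    ∃ a : ℝ, ∀ k, compOp A 0 (m + 1 + k) 0 = compOp A 1 (m + k) 0 + fun _ => a := by
  obtain ⟨a, ha⟩ := hrk (A 0 0) 0
  refine ⟨a, fun k => ?_⟩
  rw [compOp_add A 0 (m + 1), compOp_succ A 0, compOp_add A 1 m, zero_add, zero_add, add_comm 1 m]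
  simp only [Function.comp_apply, ha, compOp_add_const hA]

end compOp

theorem iSup_add_const_sub_iSup {ι : Type*} [Finite ι] [Nonempty ι] (x : ι → ℝ) (a : ℝ) :
    (⨆ i, x i + a) - ⨆ i, x i = a := by
  rw [← ciSup_add (Finite.bddAbove_range x), add_sub_cancel_left]

/-- If `A_{n-1}⋯A_1` has rank 1 for some `n ≤ t`, then
`max_i(A_{t-1}⋯A_0 0)_i - max_i(A_{t-1}⋯A_1 0)_i
  = max_i(A_{n-1}⋯A_0 0)_i - max_i(A_{n-1}⋯A_1 0)_i`. -/
theorem memory_loss_difference {d : ℕ} [NeZero d]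
    (A : ℕ → (Fin d → ℝ) → (Fin d → ℝ)) (hA : ∀ k, Topical d (A k))
    (n t : ℕ) (hn : 1 ≤ n) (hnt : n ≤ t)
    (hrk : Rank1 d (compOp A 1 (n - 1))) :
    (⨆ i, compOp A 0 t 0 i) - (⨆ i, compOp A 1 (t - 1) 0 i) =
      (⨆ i, compOp A 0 n 0 i) - (⨆ i, compOp A 1 (n - 1) 0 i) := by
  obtain ⟨m, rfl⟩ : ∃ m, n = m + 1 := ⟨n - 1, by omega⟩
  obtain ⟨k, rfl⟩ : ∃ k, t = m + 1 + k := ⟨t - (m + 1), by omega⟩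
  rw [Nat.add_sub_cancel] at hrk ⊢
  obtain ⟨a, ha⟩ := hrk.compOp_zero_apply_eq_add_const hA
  have hdiff : ∀ j, (⨆ i, compOp A 0 (m + 1 + j) 0 i) - (⨆ i, compOp A 1 (m + j) 0 i) = a :=
    fun j => by simp only [ha, Pi.add_apply, iSup_add_const_sub_iSup]
  rw [show m + 1 + k - 1 = m + k by omega, hdiff k, ← hdiff 0, add_zero, add_zero]
end

section
/- The map x ↦ (max_i x_i, x mod R·1) is a bi-Lipschitz homeomorphism from R^d (with sup norm) onto R × PR^d_max, where PR^d_max carries the projective metric δ(x,y) = max_i(x_i−y_i) + max_i(y_i−x_i). -/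
/-- The projective distance `δ(x,y) = max_i (x_i - y_i) + max_i (y_i - x_i)`. -/
noncomputable def delta {d : ℕ} (x y : Fin d → ℝ) : ℝ :=
  (⨆ i, (x i - y i)) + ⨆ i, (y i - x i)

/-- The equivalence `x ∼ y ↔ x - y ∈ ℝ·1` on `ℝ^d`. -/
def projSetoid (d : ℕ) : Setoid (Fin d → ℝ) where
  r x y := ∃ a : ℝ, x = y + fun _ => a
  iseqv := by
    refine ⟨fun x => ⟨0, by funext i; simp⟩, ?_, ?_⟩
    · rintro x y ⟨a, rfl⟩; exact ⟨-a, by funext i; simp⟩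
    · rintro x y z ⟨a, rfl⟩ ⟨b, rfl⟩
      exact ⟨b + a, by funext i; simp; ring⟩

/-- The projective space `PR^d_max = ℝ^d / ℝ·1`. -/
def PRmax (d : ℕ) := Quotient (projSetoid d)

/-- The projective metric on `PR^d_max`, computed on representatives. -/
noncomputable def deltaQ {d : ℕ} (p q : PRmax d) : ℝ := delta p.out q.out

set_option linter.unusedSectionVars false

variable {d : ℕ} [NeZero d]

lemma bddA (f : Fin d → ℝ) : BddAbove (Set.range f) :=
  Set.Finite.bddAbove (Set.finite_range f)

lemma ne_inst : Nonempty (Fin d) := ⟨⟨0, Nat.pos_of_ne_zero (NeZero.ne d)⟩⟩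

lemma isup_shift (f : Fin d → ℝ) (a : ℝ) :
    (⨆ i, (f i + a)) = (⨆ i, f i) + a := by
  haveI := (ne_inst (d := d))
  exact (ciSup_add (bddA f) a).symm

lemma delta_shift (x y : Fin d → ℝ) (a b : ℝ) :
    delta (x + fun _ => a) (y + fun _ => b) = delta x y := by
  haveI := (ne_inst (d := d))
  unfold delta
  simp only [Pi.add_apply]
  have h1 : (⨆ i, (x i + a - (y i + b))) = (⨆ i, (x i - y i)) + (a - b) := by
    rw [← isup_shift]; exact iSup_congr fun i => by ring
  have h2 : (⨆ i, (y i + b - (x i + a))) = (⨆ i, (y i - x i)) + (b - a) := by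
    rw [← isup_shift]; exact iSup_congr fun i => by ring
  rw [h1, h2]; ring

lemma deltaQ_mk (x y : Fin d → ℝ) :
    deltaQ (Quotient.mk (projSetoid d) x) (Quotient.mk (projSetoid d) y) = delta x y := by
  obtain ⟨a, ha⟩ := Quotient.mk_out (s := projSetoid d) x
  obtain ⟨b, hb⟩ := Quotient.mk_out (s := projSetoid d) y
  unfold deltaQ
  rw [ha, hb, delta_shift]

lemma isup_attained (f : Fin d → ℝ) : ∃ i, f i = ⨆ j, f j := by
  haveI := (ne_inst (d := d))
  obtain ⟨i, hi⟩ := Finite.exists_max f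
  exact ⟨i, le_antisymm (le_ciSup (bddA f) i) (ciSup_le hi)⟩

/-- The map `x ↦ (max_i x_i, x̄)` is a bi-Lipschitz homeomorphism from `ℝ^d` with the
sup norm onto `ℝ × PR^d_max`, where `PR^d_max` carries the projective metric `δ`
(the product carries the max of the two metrics). -/
theorem biLipschitz_real_times_projective {d : ℕ} [NeZero d] :
    (∀ x y : Fin d → ℝ,
        deltaQ (Quotient.mk (projSetoid d) x) (Quotient.mk (projSetoid d) y) =
          delta x y) ∧
    Function.Bijective
      (fun x : Fin d → ℝ => ((⨆ i, x i, Quotient.mk (projSetoid d) x) :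
        ℝ × PRmax d)) ∧
    ∃ K : ℝ, 0 < K ∧ ∀ x y : Fin d → ℝ,
      (max |(⨆ i, x i) - ⨆ i, y i|
          (deltaQ (Quotient.mk (projSetoid d) x) (Quotient.mk (projSetoid d) y))
        ≤ K * ‖x - y‖) ∧
      ‖x - y‖ ≤ K * max |(⨆ i, x i) - ⨆ i, y i|
          (deltaQ (Quotient.mk (projSetoid d) x) (Quotient.mk (projSetoid d) y)) := by
  haveI := (ne_inst (d := d))
  refine ⟨deltaQ_mk, ⟨?_, ?_⟩, ⟨2, two_pos, ?_⟩⟩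
  · -- injective
    intro x y h
    have hs : (⨆ i, x i) = ⨆ i, y i := congrArg Prod.fst h
    obtain ⟨a, rfl⟩ := Quotient.exact (congrArg Prod.snd h)
    have h2 : (⨆ i, (y i + a)) = ⨆ i, y i := by
      simpa [Pi.add_apply] using hs
    rw [isup_shift] at h2
    have ha : a = 0 := by linarith
    funext i; simp [ha]
  · -- surjective
    rintro ⟨t, q⟩
    set z : Fin d → ℝ := q.out + fun _ => (t - ⨆ i, q.out i) with hz
    refine ⟨z, ?_⟩
    have h1 : (⨆ i, z i) = t := by
      simp only [hz, Pi.add_apply]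
      rw [isup_shift]; ring
    have h2 : Quotient.mk (projSetoid d) z = q := by
      have := Quotient.sound (s := projSetoid d)
        (a := z) (b := q.out)
        ⟨t - ⨆ i, q.out i, hz⟩
      rw [this]; exact Quotient.out_eq q
    simp only [h1, h2]
  · -- Lipschitz bounds
    intro x y
    rw [deltaQ_mk]
    set m := ⨆ i, (x i - y i) with hm
    set n := ⨆ i, (y i - x i) with hn
    have hmB : ∀ i, x i - y i ≤ m := fun i => le_ciSup (bddA fun j => x j - y j) i
    have hnB : ∀ i, y i - x i ≤ n := fun i => le_ciSup (bddA fun j => y j - x j) i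
    have hnorm_i : ∀ i, |x i - y i| ≤ ‖x - y‖ := fun i => by
      have := norm_le_pi_norm (x - y) i
      simpa [Real.norm_eq_abs] using this
    have hm_le : m ≤ ‖x - y‖ :=
      ciSup_le fun i => le_trans (le_abs_self _) (hnorm_i i)
    have hn_le : n ≤ ‖x - y‖ := ciSup_le fun i => by
      have := hnorm_i i
      have h' : y i - x i ≤ |x i - y i| := by
        rw [abs_sub_comm]; exact le_abs_self _
      linarith
    have hΔm : (⨆ i, x i) - (⨆ i, y i) ≤ m := by
      have : (⨆ i, x i) ≤ m + ⨆ i, y i := ciSup_le fun i => by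
        have := hmB i
        have := le_ciSup (bddA y) i
        linarith
      linarith
    have hΔn : (⨆ i, y i) - (⨆ i, x i) ≤ n := by
      have : (⨆ i, y i) ≤ n + ⨆ i, x i := ciSup_le fun i => by
        have := hnB i
        have := le_ciSup (bddA x) i
        linarith
      linarith
    have h0 : 0 ≤ m + n := by
      obtain ⟨i⟩ := (ne_inst (d := d))
      have := hmB i; have := hnB i; linarith
    have habs1 : (⨆ i, x i) - (⨆ i, y i) ≤ |(⨆ i, x i) - ⨆ i, y i| := le_abs_self _
    have habs2 : -|(⨆ i, x i) - ⨆ i, y i| ≤ (⨆ i, x i) - (⨆ i, y i) := neg_abs_le _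
    have hnorm_le : ‖x - y‖ ≤ max m n := by
      have hmax0 : 0 ≤ max m n := by
        have := le_max_left m n; have := le_max_right m n; linarith
      rw [pi_norm_le_iff_of_nonneg hmax0]
      intro i
      rw [Real.norm_eq_abs, Pi.sub_apply, abs_sub_le_iff]
      exact ⟨(hmB i).trans (le_max_left m n), (hnB i).trans (le_max_right m n)⟩
    constructor
    · unfold delta
      rw [← hm, ← hn]
      apply max_le
      · rw [abs_le]
        constructor <;> [linarith; linarith [norm_nonneg (x - y)]]
      · linarith
    · unfold delta
      rw [← hm, ← hn]
      have key : max m n ≤ |(⨆ i, x i) - ⨆ i, y i| + (m + n) := by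
        apply max_le <;> linarith
      have h1 := le_max_left |(⨆ i, x i) - ⨆ i, y i| (m + n)
      have h2 := le_max_right |(⨆ i, x i) - ⨆ i, y i| (m + n)
      linarith
end
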